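/- Let Γ ∈ M_n(ℂ) be the n×n lower-triangular Jordan block with eigenvalue γ ∈ ℂ, where Re(γ) ≠ 0. Let η₁, η₂ ∈ ℂⁿ and suppose that the first component of η₁ or the first component of η₂ is different from zero. If Ω ∈ M_n(ℂ) satisfies Γ·Ω + Ω·Γᴴ = η₁·η₁ᴴ + η₂·η₂ᴴ, then Ω is invertible. -/

import Mathlib

open Matrix

/-- The n×n lower-triangular Jordan block with eigenvalue γ. -/
def jordanBlock (n : ℕ) (γ : ℂ) : Matrix (Fin n) (Fin n) ℂ :=
  Matrix.of fun i j => if (i : ℕ) = (j : ℕ) then γ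
    else if (i : ℕ) = (j : ℕ) + 1 then 1 else 0

/-- A vector of ℂⁿ viewed as an n×1 column matrix. -/
def colV {n : ℕ} (η : Fin n → ℂ) : Matrix (Fin n) (Fin 1) ℂ :=
  Matrix.of fun i _ => η i

/-!
Write `Γ = γ • 1 + N` with `N` the nilpotent lower shift. Since `γ + γ̄ = 2 Re γ ≠ 0`, the map
`X ↦ Γ X + X Γᴴ` is `(γ + γ̄) • id` plus a nilpotent operator, hence injective; as `Ωᴴ` solves the
same equation, `Ω` is Hermitian. If `Ω v = 0`, then `vᴴ (Γ Ω + Ω Γᴴ) v = |η₁ᴴ v|² + |η₂ᴴ v|²`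
vanishes, so `η₁ᴴ v = η₂ᴴ v = 0` and `Ω Γᴴ v = 0`: the kernel of `Ω` is invariant under the
nilpotent `Nᴴ`. A nonzero kernel would then contain a nonzero vector killed by `Nᴴ`, i.e. a nonzero
multiple of the first basis vector `e₀`, whereas `η₁ᴴ e₀` and `η₂ᴴ e₀` are not both zero.
-/

theorem Module.End.exists_mem_ne_zero_apply_eq_zero_of_isNilpotent {R M : Type*} [Semiring R]
    [AddCommMonoid M] [Module R M] {f : Module.End R M} (hf : IsNilpotent f)
    {p : Submodule R M} (hp : ∀ v ∈ p, f v ∈ p) {x : M} (hx : x ∈ p) (hx0 : x ≠ 0) :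
    ∃ y ∈ p, y ≠ 0 ∧ f y = 0 := by
  classical
  obtain ⟨m, hm⟩ := hf
  have hex : ∃ k, (f ^ k) x = 0 := ⟨m, by simp [hm]⟩
  obtain ⟨j, hj⟩ : ∃ j, Nat.find hex = j + 1 :=
    Nat.exists_eq_succ_of_ne_zero fun h0 => hx0 (by simpa [h0] using Nat.find_spec hex)
  refine ⟨(f ^ j) x, pow_apply_mem_of_forall_mem j hp x hx, Nat.find_min hex (by omega), ?_⟩
  rw [← Module.End.mul_apply, ← pow_succ', ← hj]
  exact Nat.find_spec hex

theorem eq_zero_of_smul_one_add_mul_add_mul_smul_one_add_eq_zero {K A : Type*} [Field K] [Ring A]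
    [Algebra K A] {a b : K} {N M X : A} (hab : a + b ≠ 0) (hN : IsNilpotent N)
    (hM : IsNilpotent M) (h : (a • 1 + N) * X + X * (b • 1 + M) = 0) : X = 0 := by
  set L : Module.End K A := LinearMap.mulLeft K N + LinearMap.mulRight K M
  have hL : IsNilpotent L := (LinearMap.commute_mulLeft_right N M).isNilpotent_add
    ((LinearMap.isNilpotent_mulLeft_iff K N).2 hN) ((LinearMap.isNilpotent_mulRight_iff K M).2 hM)
  have hunit : IsUnit (algebraMap K _ (a + b) + L) :=
    hL.isUnit_add_left_of_commute (hab.isUnit.map _) (Algebra.commutes _ _).symm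
  have hX : (algebraMap K _ (a + b) + L) X = 0 := by
    rw [← h]
    simp only [L, LinearMap.add_apply, Module.algebraMap_end_apply, LinearMap.mulLeft_apply,
      LinearMap.mulRight_apply, add_mul, mul_add, smul_mul_assoc, mul_smul_comm, one_mul, mul_one,
      add_smul]
    abel
  exact (Module.End.isUnit_iff _).1 hunit |>.injective (hX.trans (map_zero _).symm)

def lowerShift (R : Type*) [Zero R] [One R] (n : ℕ) : Matrix (Fin n) (Fin n) R :=
  Matrix.of fun i j => if (i : ℕ) = (j : ℕ) + 1 then 1 else 0

theorem jordanBlock_eq_smul_one_add (n : ℕ) (γ : ℂ) :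
    jordanBlock n γ = γ • 1 + lowerShift ℂ n := by
  ext i j
  simp only [jordanBlock, lowerShift, Matrix.add_apply, Matrix.smul_apply, one_apply, of_apply,
    Fin.ext_iff, smul_eq_mul]
  split_ifs <;> simp_all

theorem lowerShift_pow_apply {R : Type*} [Semiring R] {n : ℕ} (k : ℕ) (i j : Fin n) :
    (lowerShift R n ^ k) i j = if (i : ℕ) = j + k then 1 else 0 := by
  induction k generalizing i with
  | zero => simp [one_apply, Fin.ext_iff]
  | succ k ih =>
    rw [pow_succ', mul_apply]
    simp_rw [ih]
    by_cases hi : (i : ℕ) = j + (k + 1)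
    · rw [Finset.sum_eq_single ⟨j + k, by omega⟩]
      · simp [lowerShift, hi, add_assoc]
      · intro l _ hl
        simp [Fin.ext_iff] at hl
        simp [hl]
      · simp
    · rw [if_neg hi]
      refine Finset.sum_eq_zero fun l _ => ?_
      simp only [lowerShift, of_apply]
      split_ifs <;> simp_all; omega

theorem isNilpotent_lowerShift (R : Type*) [Semiring R] (n : ℕ) : IsNilpotent (lowerShift R n) :=
  ⟨n, by ext i j; rw [lowerShift_pow_apply, if_neg (by omega), Matrix.zero_apply]⟩

theorem conjTranspose_lowerShift_mulVec_apply {R : Type*} [Semiring R] [StarRing R] {n : ℕ}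
    (y : Fin n → R) (i j : Fin n) (hij : (j : ℕ) = i + 1) :
    ((lowerShift R n)ᴴ *ᵥ y) i = y j := by
  rw [mulVec, dotProduct, Finset.sum_eq_single j]
  · simp [lowerShift, hij]
  · intro l _ hl
    simp [lowerShift, ← hij, Fin.val_ne_of_ne hl]
  · simp

theorem eq_single_of_conjTranspose_lowerShift_mulVec_eq_zero {R : Type*} [Semiring R] [StarRing R]
    {n : ℕ} (hn : 0 < n) {y : Fin n → R} (hy : (lowerShift R n)ᴴ *ᵥ y = 0) :
    y = Pi.single ⟨0, hn⟩ (y ⟨0, hn⟩) := by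
  funext j
  by_cases hj : j = ⟨0, hn⟩
  · subst hj; simp
  · rw [Pi.single_eq_of_ne hj, ← conjTranspose_lowerShift_mulVec_apply y ⟨j - 1, by omega⟩ j
      (by simp [Fin.ext_iff] at hj ⊢; omega), hy, Pi.zero_apply]

theorem IsNilpotent.conjTranspose {ι R : Type*} [Fintype ι] [DecidableEq ι] [Semiring R]
    [StarRing R] {M : Matrix ι ι R} (hM : IsNilpotent M) : IsNilpotent Mᴴ := by
  obtain ⟨k, hk⟩ := hM
  exact ⟨k, by rw [← conjTranspose_pow, hk, conjTranspose_zero]⟩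

section Lyapunov

variable {ι 𝕜 : Type*} [Fintype ι] [RCLike 𝕜]

theorem isHermitian_of_smul_one_add_mul_add_mul_conjTranspose_eq [DecidableEq ι] {a : 𝕜}
    {N Ω R : Matrix ι ι 𝕜} (ha : a + star a ≠ 0) (hN : IsNilpotent N) (hR : R.IsHermitian)
    (h : (a • 1 + N) * Ω + Ω * (a • 1 + N)ᴴ = R) : Ω.IsHermitian := by
  have hH : (a • 1 + N) * Ωᴴ + Ωᴴ * (a • 1 + N)ᴴ = R := by
    simpa [conjTranspose_add, conjTranspose_mul, add_comm, hR.eq] using congrArg conjTranspose h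
  rw [conjTranspose_add, conjTranspose_smul, conjTranspose_one] at h hH
  refine sub_eq_zero.1
    (eq_zero_of_smul_one_add_mul_add_mul_smul_one_add_eq_zero ha hN hN.conjTranspose ?_)
  rw [mul_sub, sub_mul, sub_add_sub_comm, hH, h, sub_self]

open scoped ComplexOrder in
theorem dotProduct_eq_zero_of_lyapunov_of_mulVec_eq_zero {Γ Ω : Matrix ι ι 𝕜} {η₁ η₂ : ι → 𝕜}
    (hΩ : Ω.IsHermitian)
    (h : Γ * Ω + Ω * Γᴴ = vecMulVec η₁ (star η₁) + vecMulVec η₂ (star η₂))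
    {v : ι → 𝕜} (hv : Ω *ᵥ v = 0) : star η₁ ⬝ᵥ v = 0 ∧ star η₂ ⬝ᵥ v = 0 := by
  have hvΩ : star v ᵥ* Ω = 0 := by rw [← hΩ.eq, ← star_mulVec, hv, star_zero]
  have hq : star v ⬝ᵥ ((Γ * Ω + Ω * Γᴴ) *ᵥ v) = 0 := by
    rw [add_mulVec, ← mulVec_mulVec, ← mulVec_mulVec, hv, mulVec_zero, zero_add,
      dotProduct_mulVec, hvΩ, zero_dotProduct]
  have hstar (η : ι → 𝕜) : star v ⬝ᵥ η = star (star η ⬝ᵥ v) := by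
    rw [← star_dotProduct_star, star_star]
  rw [h, add_mulVec, vecMulVec_mulVec, vecMulVec_mulVec, dotProduct_add, op_smul_eq_smul,
    op_smul_eq_smul, dotProduct_smul, dotProduct_smul, hstar, hstar, smul_eq_mul, smul_eq_mul] at hq
  simpa using (add_eq_zero_iff_of_nonneg (mul_star_self_nonneg _) (mul_star_self_nonneg _)).1 hq

theorem mulVec_conjTranspose_mulVec_eq_zero_of_lyapunov {Γ Ω : Matrix ι ι 𝕜} {η₁ η₂ : ι → 𝕜}
    (hΩ : Ω.IsHermitian)
    (h : Γ * Ω + Ω * Γᴴ = vecMulVec η₁ (star η₁) + vecMulVec η₂ (star η₂))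
    {v : ι → 𝕜} (hv : Ω *ᵥ v = 0) : Ω *ᵥ (Γᴴ *ᵥ v) = 0 := by
  obtain ⟨h₁, h₂⟩ := dotProduct_eq_zero_of_lyapunov_of_mulVec_eq_zero hΩ h hv
  simpa [add_mulVec, ← mulVec_mulVec, hv, vecMulVec_mulVec, h₁, h₂] using congrArg (· *ᵥ v) h

end Lyapunov

theorem colV_mul_conjTranspose {n : ℕ} (η : Fin n → ℂ) :
    colV η * (colV η)ᴴ = vecMulVec η (star η) := by
  rw [vecMulVec_eq (Fin 1), ← conjTranspose_replicateCol]
  rfl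

theorem stmt_7 {n : ℕ} (hn : 0 < n) (γ : ℂ) (hγ : γ.re ≠ 0)
    (η₁ η₂ : Fin n → ℂ) (h0 : η₁ ⟨0, hn⟩ ≠ 0 ∨ η₂ ⟨0, hn⟩ ≠ 0)
    (Ω : Matrix (Fin n) (Fin n) ℂ)
    (hLyap : jordanBlock n γ * Ω + Ω * (jordanBlock n γ)ᴴ
        = colV η₁ * (colV η₁)ᴴ + colV η₂ * (colV η₂)ᴴ) :
    IsUnit Ω := by
  set N := lowerShift ℂ n
  rw [jordanBlock_eq_smul_one_add, colV_mul_conjTranspose, colV_mul_conjTranspose] at hLyap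
  have hΩ : Ω.IsHermitian := by
    refine isHermitian_of_smul_one_add_mul_add_mul_conjTranspose_eq ?_
      (isNilpotent_lowerShift ℂ n) ?_ hLyap
    · simpa [Complex.add_conj] using hγ
    · simp [IsHermitian, conjTranspose_vecMulVec]
  have hinv : ∀ v ∈ LinearMap.ker (toLinAlgEquiv' Ω),
      toLinAlgEquiv' Nᴴ v ∈ LinearMap.ker (toLinAlgEquiv' Ω) := by
    intro v hv
    simp only [LinearMap.mem_ker, toLinAlgEquiv'_apply] at hv ⊢
    simpa [add_mulVec, mulVec_add, smul_mulVec, mulVec_smul, hv] using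
      mulVec_conjTranspose_mulVec_eq_zero_of_lyapunov hΩ hLyap hv
  rw [isUnit_iff_isUnit_det, isUnit_iff_ne_zero, ne_eq, ← exists_mulVec_eq_zero_iff]
  rintro ⟨x, hx0, hx⟩
  obtain ⟨y, hy, hy0, hNy⟩ := Module.End.exists_mem_ne_zero_apply_eq_zero_of_isNilpotent
    ((isNilpotent_lowerShift ℂ n).conjTranspose.map toLinAlgEquiv') hinv (x := x)
    (by simpa using hx) hx0
  rw [LinearMap.mem_ker, toLinAlgEquiv'_apply] at hy
  rw [toLinAlgEquiv'_apply] at hNy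
  obtain ⟨h₁, h₂⟩ := dotProduct_eq_zero_of_lyapunov_of_mulVec_eq_zero hΩ hLyap hy
  have hy_eq := eq_single_of_conjTranspose_lowerShift_mulVec_eq_zero hn hNy
  have hy₀ : y ⟨0, hn⟩ ≠ 0 := fun h => hy0 (by rw [hy_eq, h, Pi.single_zero])
  rw [hy_eq, dotProduct_single, Pi.star_apply, mul_eq_zero, star_eq_zero] at h₁ h₂
  exact h0.elim (· (h₁.resolve_right hy₀)) (· (h₂.resolve_right hy₀))
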